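/- Work in R = ℂ[x₀, x₁, x₂, x₃] and let a₀, a₁, a₂, a₃ ∈ ℂ satisfy a₀ + a₁ + a₂ + a₃ = 0. Define the antisymmetric matrix π with π₀₁ = (a₃ − a₂)x₀x₁, π₀₂ = (a₁ − a₃)x₀x₂, π₀₃ = (a₂ − a₁)x₀x₃, π₁₂ = (a₃ − a₀)x₁x₂, π₁₃ = (a₀ − a₂)x₁x₃, π₂₃ = (a₁ − a₀)x₂x₃ (and π j i = −π i j). Then the bracket {f, g} = Σ_{i,j} π i j · ∂ᵢf · ∂ⱼg satisfies the Jacobi identity, and π is unimodular: Σ_j ∂ⱼ(π i j) = 0 for every i. -/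

import Mathlib

/-!
The matrix is log-canonical, `π i j = q i j • xᵢ xⱼ` with `q` skew-symmetric. For a skew
biderivation the Jacobiator is a derivation in each argument, so it vanishes as soon as it
vanishes on the coordinates, where `Σ_cyc {xᵢ, {xⱼ, xₖ}} = Σ_cyc q j k (q i j + q i k) · xᵢxⱼxₖ`
cancels by skew-symmetry alone. Unimodularity reads `Σⱼ ∂ⱼ π i j = (Σⱼ q i j) xᵢ`, and each row of
`q` sums to zero.
-/

open MvPolynomial

noncomputable section

def brkt (π : Fin 4 → Fin 4 → MvPolynomial (Fin 4) ℂ)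
    (f g : MvPolynomial (Fin 4) ℂ) : MvPolynomial (Fin 4) ℂ :=
  ∑ i : Fin 4, ∑ j : Fin 4, π i j * pderiv i f * pderiv j g

def logCanonical {σ R : Type*} [CommSemiring R] (q : σ → σ → R) :
    σ → σ → MvPolynomial σ R :=
  fun i j => C (q i j) * (X i * X j)

theorem sum_pderiv_logCanonical {σ R : Type*} [Fintype σ] [DecidableEq σ] [CommSemiring R]
    (q : σ → σ → R) (i : σ) (hq : q i i = 0) :
    ∑ j, pderiv j (logCanonical q i j) = C (∑ j, q i j) * X i := by
  simp [logCanonical, pderiv_X, Pi.single_apply, mul_add, Finset.sum_add_distrib, hq,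
    map_sum, Finset.sum_mul]

def jacobiator (π : Fin 4 → Fin 4 → MvPolynomial (Fin 4) ℂ) (f g h : MvPolynomial (Fin 4) ℂ) :
    MvPolynomial (Fin 4) ℂ :=
  brkt π f (brkt π g h) + brkt π g (brkt π h f) + brkt π h (brkt π f g)

section Bracket

variable {π : Fin 4 → Fin 4 → MvPolynomial (Fin 4) ℂ}

theorem brkt_antisymm (hπ : ∀ i j, π j i = -π i j) (f g : MvPolynomial (Fin 4) ℂ) :
    brkt π g f = -brkt π f g := by
  rw [brkt, brkt, Finset.sum_comm, ← Finset.sum_neg_distrib]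
  refine Finset.sum_congr rfl fun j _ => ?_
  rw [← Finset.sum_neg_distrib]
  exact Finset.sum_congr rfl fun i _ => by rw [hπ i j]; ring

theorem brkt_add_left (f₁ f₂ g : MvPolynomial (Fin 4) ℂ) :
    brkt π (f₁ + f₂) g = brkt π f₁ g + brkt π f₂ g := by
  simp only [brkt, map_add, mul_add, add_mul, Finset.sum_add_distrib]

theorem brkt_add_right (f g₁ g₂ : MvPolynomial (Fin 4) ℂ) :
    brkt π f (g₁ + g₂) = brkt π f g₁ + brkt π f g₂ := by
  simp only [brkt, map_add, mul_add, Finset.sum_add_distrib]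

theorem brkt_C_left (c : ℂ) (g : MvPolynomial (Fin 4) ℂ) : brkt π (C c) g = 0 := by
  simp [brkt]

theorem brkt_C_right (f : MvPolynomial (Fin 4) ℂ) (c : ℂ) : brkt π f (C c) = 0 := by
  simp [brkt]

theorem brkt_zero_right (f : MvPolynomial (Fin 4) ℂ) : brkt π f 0 = 0 := by
  simpa using brkt_C_right (π := π) f 0

theorem brkt_mul_left (f₁ f₂ g : MvPolynomial (Fin 4) ℂ) :
    brkt π (f₁ * f₂) g = f₁ * brkt π f₂ g + f₂ * brkt π f₁ g := by
  simp only [brkt, pderiv_mul, Finset.mul_sum, ← Finset.sum_add_distrib]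
  exact Finset.sum_congr rfl fun i _ => Finset.sum_congr rfl fun j _ => by ring

theorem brkt_mul_right (f g₁ g₂ : MvPolynomial (Fin 4) ℂ) :
    brkt π f (g₁ * g₂) = g₁ * brkt π f g₂ + g₂ * brkt π f g₁ := by
  simp only [brkt, pderiv_mul, Finset.mul_sum, ← Finset.sum_add_distrib]
  exact Finset.sum_congr rfl fun i _ => Finset.sum_congr rfl fun j _ => by ring

theorem brkt_X_left (i : Fin 4) (g : MvPolynomial (Fin 4) ℂ) :
    brkt π (X i) g = ∑ j, π i j * pderiv j g := by
  simp [brkt, pderiv_X, Pi.single_apply]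

theorem brkt_X_X (i j : Fin 4) : brkt π (X i) (X j) = π i j := by
  simp [brkt_X_left, pderiv_X, Pi.single_apply]

theorem jacobiator_rotate (f g h : MvPolynomial (Fin 4) ℂ) :
    jacobiator π f g h = jacobiator π g h f := by
  simp only [jacobiator]; ring

theorem jacobiator_C_left (c : ℂ) (g h : MvPolynomial (Fin 4) ℂ) :
    jacobiator π (C c) g h = 0 := by
  simp only [jacobiator, brkt_C_left, brkt_C_right, brkt_zero_right, add_zero]

theorem jacobiator_add_left (f₁ f₂ g h : MvPolynomial (Fin 4) ℂ) :
    jacobiator π (f₁ + f₂) g h = jacobiator π f₁ g h + jacobiator π f₂ g h := by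
  simp only [jacobiator, brkt_add_left, brkt_add_right]; ring

theorem jacobiator_mul_left (hπ : ∀ i j, π j i = -π i j) (f₁ f₂ g h : MvPolynomial (Fin 4) ℂ) :
    jacobiator π (f₁ * f₂) g h = f₁ * jacobiator π f₂ g h + f₂ * jacobiator π f₁ g h := by
  simp only [jacobiator, brkt_mul_left, brkt_mul_right, brkt_add_right]
  rw [brkt_antisymm hπ g f₁, brkt_antisymm hπ g f₂]
  ring

theorem jacobiator_eq_zero_of_forall_X (hπ : ∀ i j, π j i = -π i j)
    {g h : MvPolynomial (Fin 4) ℂ} (hX : ∀ i, jacobiator π (X i) g h = 0)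
    (f : MvPolynomial (Fin 4) ℂ) : jacobiator π f g h = 0 := by
  induction f using MvPolynomial.induction_on with
  | C c => exact jacobiator_C_left c g h
  | add p q hp hq => rw [jacobiator_add_left, hp, hq, add_zero]
  | mul_X p i hp => rw [jacobiator_mul_left hπ, hp, hX, mul_zero, mul_zero, add_zero]

theorem jacobiator_eq_zero_of_forall_X_X_X (hπ : ∀ i j, π j i = -π i j)
    (hX : ∀ i j k, jacobiator π (X i) (X j) (X k) = 0) (f g h : MvPolynomial (Fin 4) ℂ) :
    jacobiator π f g h = 0 := by
  have hXX : ∀ i j h, jacobiator π (X i) (X j) h = 0 := fun i j h => by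
    rw [← jacobiator_rotate]
    exact jacobiator_eq_zero_of_forall_X hπ (fun k => hX k i j) h
  have hX' : ∀ i g h, jacobiator π (X i) g h = 0 := fun i g h => by
    rw [jacobiator_rotate]
    refine jacobiator_eq_zero_of_forall_X hπ (fun k => ?_) g
    rw [← jacobiator_rotate]
    exact hXX i k h
  exact jacobiator_eq_zero_of_forall_X hπ (fun i => hX' i g h) f

end Bracket

theorem brkt_logCanonical_X (q : Fin 4 → Fin 4 → ℂ) (i j k : Fin 4) :
    brkt (logCanonical q) (X i) (logCanonical q j k) =
      C (q j k) * (C (q i j) + C (q i k)) * (X i * X j * X k) := by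
  simp only [logCanonical, brkt_X_left, Derivation.leibniz, pderiv_X, Pi.single_apply, smul_eq_mul,
    mul_ite, mul_one, mul_zero, mul_add, derivation_C, add_zero, Finset.sum_add_distrib,
    Finset.sum_ite_eq, Finset.mem_univ, ↓reduceIte]
  ring

theorem jacobiator_logCanonical (q : Fin 4 → Fin 4 → ℂ) (hq : ∀ i j, q j i = -q i j)
    (f g h : MvPolynomial (Fin 4) ℂ) : jacobiator (logCanonical q) f g h = 0 := by
  have hπ : ∀ i j, logCanonical q j i = -logCanonical q i j := fun i j => by
    simp only [logCanonical, hq i j, map_neg]; ring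
  refine jacobiator_eq_zero_of_forall_X_X_X hπ (fun i j k => ?_) f g h
  simp only [jacobiator, brkt_X_X, brkt_logCanonical_X, hq i j, hq j k, hq k i, map_neg]
  ring

-- Entry `(i, j)` is `aₗ - aₖ` for `(i, j, k, l)` an even permutation of `(0, 1, 2, 3)`.
def l1111Coeff (a₀ a₁ a₂ a₃ : ℂ) : Fin 4 → Fin 4 → ℂ :=
  ![![0, a₃ - a₂, a₁ - a₃, a₂ - a₁],
    ![a₂ - a₃, 0, a₃ - a₀, a₀ - a₂],
    ![a₃ - a₁, a₀ - a₃, 0, a₁ - a₀],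
    ![a₁ - a₂, a₂ - a₀, a₀ - a₁, 0]]

theorem l1111Coeff_antisymm (a₀ a₁ a₂ a₃ : ℂ) (i j : Fin 4) :
    l1111Coeff a₀ a₁ a₂ a₃ j i = -l1111Coeff a₀ a₁ a₂ a₃ i j := by
  fin_cases i <;> fin_cases j <;> simp [l1111Coeff]

theorem sum_l1111Coeff (a₀ a₁ a₂ a₃ : ℂ) (i : Fin 4) : ∑ j, l1111Coeff a₀ a₁ a₂ a₃ i j = 0 := by
  fin_cases i <;> simp [l1111Coeff, Fin.sum_univ_four]

theorem stmt_10_general (a₀ a₁ a₂ a₃ : ℂ)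
    (π : Fin 4 → Fin 4 → MvPolynomial (Fin 4) ℂ)
    (hskew : ∀ i j, π j i = - π i j)
    (h01 : π 0 1 = C (a₃ - a₂) * (X 0 * X 1))
    (h02 : π 0 2 = C (a₁ - a₃) * (X 0 * X 2))
    (h03 : π 0 3 = C (a₂ - a₁) * (X 0 * X 3))
    (h12 : π 1 2 = C (a₃ - a₀) * (X 1 * X 2))
    (h13 : π 1 3 = C (a₀ - a₂) * (X 1 * X 3))
    (h23 : π 2 3 = C (a₁ - a₀) * (X 2 * X 3)) :
    (∀ f g h : MvPolynomial (Fin 4) ℂ,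
      brkt π f (brkt π g h) + brkt π g (brkt π h f) + brkt π h (brkt π f g) = 0) ∧
    (∀ i : Fin 4, ∑ j : Fin 4, pderiv j (π i j) = 0) := by
  have hdiag : ∀ i, π i i = 0 := fun i => CharZero.eq_neg_self_iff.mp (hskew i i)
  obtain rfl : π = logCanonical (l1111Coeff a₀ a₁ a₂ a₃) := by
    funext i j
    fin_cases i <;> fin_cases j <;>
      simp only [logCanonical, l1111Coeff, Matrix.cons_val', Matrix.cons_val, Matrix.cons_val_zero,
        Matrix.cons_val_one, Matrix.cons_val_fin_one, Fin.zero_eta, Fin.mk_one, Fin.reduceFinMk,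
        Fin.isValue, hdiag, hskew 0 1, hskew 0 2, hskew 0 3, hskew 1 2, hskew 1 3, hskew 2 3,
        h01, h02, h03, h12, h13, h23, C_sub, C_0, zero_mul] <;> ring
  refine ⟨jacobiator_logCanonical _ (l1111Coeff_antisymm a₀ a₁ a₂ a₃), fun i => ?_⟩
  have hq : l1111Coeff a₀ a₁ a₂ a₃ i i = 0 :=
    CharZero.eq_neg_self_iff.mp (l1111Coeff_antisymm a₀ a₁ a₂ a₃ i i)
  rw [sum_pderiv_logCanonical _ i hq, sum_l1111Coeff, map_zero, zero_mul]

/-- The normal form of the Poisson structures in the component `L(1,1,1,1)` satisfies the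
Jacobi identity and is unimodular. -/
theorem stmt_10 (a₀ a₁ a₂ a₃ : ℂ) (ha : a₀ + a₁ + a₂ + a₃ = 0)
    (π : Fin 4 → Fin 4 → MvPolynomial (Fin 4) ℂ)
    (hskew : ∀ i j, π j i = - π i j)
    (h01 : π 0 1 = C (a₃ - a₂) * (X 0 * X 1))
    (h02 : π 0 2 = C (a₁ - a₃) * (X 0 * X 2))
    (h03 : π 0 3 = C (a₂ - a₁) * (X 0 * X 3))
    (h12 : π 1 2 = C (a₃ - a₀) * (X 1 * X 2))
    (h13 : π 1 3 = C (a₀ - a₂) * (X 1 * X 3))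
    (h23 : π 2 3 = C (a₁ - a₀) * (X 2 * X 3)) :
    (∀ f g h : MvPolynomial (Fin 4) ℂ,
      brkt π f (brkt π g h) + brkt π g (brkt π h f) + brkt π h (brkt π f g) = 0) ∧
    (∀ i : Fin 4, ∑ j : Fin 4, pderiv j (π i j) = 0) :=
  stmt_10_general a₀ a₁ a₂ a₃ π hskew h01 h02 h03 h12 h13 h23

end
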